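/- Let f ∈ S_{p,μ}, α ≥ β > 0 and δ > 0. Then ω_α(f,δ)_{p,μ} ≤ 2^{α−β} ω_β(f,δ)_{p,μ}, where {α−β} is the least integer k with k ≥ α−β. -/

import Mathlib

open MeasureTheory Filter Topology Asymptotics

noncomputable section

/-- The `k`-th Fourier coefficient of a (2π-periodic) function `f : ℝ → ℂ`:
`f̂(k) = (2π)⁻¹ ∫_0^{2π} f(t) e^{-ikt} dt`. -/
def fcoeff (f : ℝ → ℂ) (k : ℤ) : ℂ :=
  (1 / (2 * (Real.pi : ℂ))) *
    ∫ t in (0:ℝ)..(2 * Real.pi), f t * Complex.exp (-(Complex.I * (k : ℂ) * (t : ℂ)))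

/-- The admissible set defining the Luxemburg norm:
`{a > 0 : Σ_k μ_k |f̂(k)/a|^{p_k} ≤ 1}` (with the sum required to converge). -/
def lpSet (p μ : ℤ → ℝ) (f : ℝ → ℂ) : Set ℝ :=
  {a : ℝ | 0 < a ∧
    Summable (fun k : ℤ => μ k * (‖fcoeff f k‖ / a) ^ (p k)) ∧
    ∑' k : ℤ, μ k * (‖fcoeff f k‖ / a) ^ (p k) ≤ 1}

/-- The Luxemburg norm `‖f‖_{p,μ}`. -/
def luxNorm (p μ : ℤ → ℝ) (f : ℝ → ℂ) : ℝ := sInf (lpSet p μ f)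

/-- Membership in the space `S_{p,μ}`: `f` is 2π-periodic, integrable on a period, and
has finite Luxemburg norm (i.e. the admissible set is nonempty). -/
def MemS (p μ : ℤ → ℝ) (f : ℝ → ℂ) : Prop :=
  Function.Periodic f (2 * Real.pi) ∧ IntervalIntegrable f volume 0 (2 * Real.pi) ∧
    (lpSet p μ f).Nonempty

/-- Generalized binomial coefficient `binom(α,j) = α(α−1)⋯(α−j+1)/j!`. -/
def gbinom (α : ℝ) (j : ℕ) : ℝ :=
  (∏ i ∈ Finset.range j, (α - (i : ℝ))) / (j.factorial : ℝ)

/-- Fractional difference `Δ_h^α f(x) = Σ_{j=0}^∞ (−1)^j binom(α,j) f(x − jh)`. -/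
def fracDiff (α h : ℝ) (f : ℝ → ℂ) (x : ℝ) : ℂ :=
  ∑' j : ℕ, (-1 : ℂ) ^ j * (gbinom α j : ℂ) * f (x - (j : ℝ) * h)

/-- Modulus of smoothness `ω_α(f,δ)_{p,μ} = sup_{|h| ≤ δ} ‖Δ_h^α f‖_{p,μ}`. -/
def modulus (p μ : ℤ → ℝ) (α : ℝ) (f : ℝ → ℂ) (δ : ℝ) : ℝ :=
  ⨆ h : {h : ℝ // |h| ≤ δ}, luxNorm p μ (fracDiff α h.1 f)

/-- Trigonometric polynomial of degree at most `n - 1` with coefficients `c`: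
`Σ_{|k| ≤ n-1} c_k e^{ikx}`. -/
def trigSum (c : ℤ → ℂ) (n : ℕ) (x : ℝ) : ℂ :=
  ∑ k ∈ Finset.Ioo (-(n : ℤ)) (n : ℤ), c k * Complex.exp (Complex.I * (k : ℂ) * (x : ℂ))

/-- Best approximation `E_n(f)_{p,μ}` of `f` by trigonometric polynomials of degree `≤ n-1`. -/
def bestApprox (p μ : ℤ → ℝ) (n : ℕ) (f : ℝ → ℂ) : ℝ :=
  sInf {r : ℝ | ∃ c : ℤ → ℂ, r = luxNorm p μ (fun x => f x - trigSum c n x)}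

/-- `g` is the ψ-derivative of `f`: `ĝ(k) = f̂(k)/ψ_k` for `k ≠ 0` (and `ĝ(0) = 0`),
with `g` 2π-periodic and integrable on a period. -/
def IsPsiDeriv (ψ : ℤ → ℂ) (f g : ℝ → ℂ) : Prop :=
  Function.Periodic g (2 * Real.pi) ∧ IntervalIntegrable g volume 0 (2 * Real.pi) ∧
    fcoeff g 0 = 0 ∧ ∀ k : ℤ, k ≠ 0 → fcoeff g k = fcoeff f k / ψ k

/-- Trigonometric polynomial of degree at most `n`: `τ_n(x) = Σ_{|k| ≤ n} c_k e^{ikx}`. -/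
def trigPoly (c : ℤ → ℂ) (n : ℕ) (x : ℝ) : ℂ :=
  ∑ k ∈ Finset.Icc (-(n : ℤ)) (n : ℤ), c k * Complex.exp (Complex.I * (k : ℂ) * (x : ℂ))

/-- ψ-derivative of the trigonometric polynomial with coefficients `c`:
`τ_n^ψ(x) = Σ_{0<|k|≤n} (c_k/ψ_k) e^{ikx}`. -/
def trigPolyPsi (ψ : ℤ → ℂ) (c : ℤ → ℂ) (n : ℕ) (x : ℝ) : ℂ :=
  ∑ k ∈ Finset.Icc (-(n : ℤ)) (n : ℤ),
    (if k = 0 then 0 else c k / ψ k) * Complex.exp (Complex.I * (k : ℂ) * (x : ℂ))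

/-! On the Fourier side `Δ_h^α` multiplies the `k`-th coefficient by `(1 - e^{-ikh})^α`, expanded
as the binomial series `∑ (-1)^j binom(α,j) z^j`. For `γ ≥ 0` this series converges absolutely on
the closed unit disc with `∑ |binom(γ,j)| ≤ 2^{⌈γ⌉}`: for `γ ≤ 1` all coefficients after the
first have one sign, and Pascal's rule gives `∑ |binom(γ,j)| ≤ 2 ∑ |binom(γ-1,j)|`. Since
`(1 - z)^α = (1 - z)^{α-β} (1 - z)^β` (Vandermonde), every Fourier coefficient of `Δ_h^α f` is at
most `2^{⌈α-β⌉}` times the corresponding one of `Δ_h^β f`, and the Luxemburg norm is monotone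
under such coefficientwise domination. -/

open Finset

lemma gbinom_eq_ringChoose (α : ℝ) (n : ℕ) : gbinom α n = Ring.choose α n := by
  rw [Ring.choose_eq_smul, ← Polynomial.aeval_eq_smeval, ← Polynomial.eval_map_algebraMap,
    descPochhammer_map, descPochhammer_eval_eq_prod_range, gbinom, smul_eq_mul, inv_mul_eq_div]

lemma gbinom_zero_right (α : ℝ) : gbinom α 0 = 1 := by simp [gbinom]

lemma gbinom_zero_succ (n : ℕ) : gbinom 0 (n + 1) = 0 := by
  rw [gbinom_eq_ringChoose, Ring.choose_zero_succ]

lemma gbinom_succ (α : ℝ) (n : ℕ) : gbinom α (n + 1) = gbinom α n * (α - n) / (n + 1) := by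
  rw [gbinom, gbinom, prod_range_succ, Nat.factorial_succ, Nat.cast_mul, mul_comm, ← div_div]
  push_cast
  ring

lemma gbinom_succ_succ (α : ℝ) (n : ℕ) :
    gbinom (α + 1) (n + 1) = gbinom α n + gbinom α (n + 1) := by
  simp only [gbinom_eq_ringChoose, Ring.choose_succ_succ]

lemma gbinom_add (α β : ℝ) (n : ℕ) :
    gbinom (α + β) n = ∑ ij ∈ antidiagonal n, gbinom α ij.1 * gbinom β ij.2 := by
  simp only [gbinom_eq_ringChoose]
  exact Ring.add_choose_eq n (Commute.all α β)

lemma neg_one_pow_mul_gbinom_nonneg {α : ℝ} (hα : α ≤ 0) (n : ℕ) :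
    0 ≤ (-1) ^ n * gbinom α n := by
  induction n with
  | zero => simp [gbinom_zero_right]
  | succ n ih =>
    have : (-1) ^ (n + 1) * gbinom α (n + 1) = (-1) ^ n * gbinom α n * ((n - α) / (n + 1)) := by
      rw [gbinom_succ]; ring
    rw [this]
    exact mul_nonneg ih (div_nonneg (by linarith [n.cast_nonneg (α := ℝ)]) (by positivity))

lemma neg_one_pow_mul_gbinom_succ_nonneg {α : ℝ} (h0 : 0 ≤ α) (h1 : α ≤ 1) (n : ℕ) :
    0 ≤ (-1) ^ n * gbinom α (n + 1) := by
  induction n with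
  | zero => simpa [gbinom_succ, gbinom_zero_right] using h0
  | succ n ih =>
    have : (-1) ^ (n + 1) * gbinom α (n + 1 + 1)
        = (-1) ^ n * gbinom α (n + 1) * ((n + 1 - α) / (n + 1 + 1)) := by
      rw [gbinom_succ α (n + 1)]; push_cast; ring
    rw [this]
    exact mul_nonneg ih (div_nonneg (by linarith [n.cast_nonneg (α := ℝ)]) (by positivity))

lemma sum_range_neg_one_pow_mul_gbinom (α : ℝ) (n : ℕ) :
    ∑ j ∈ range (n + 1), (-1) ^ j * gbinom α j = (-1) ^ n * gbinom (α - 1) n := by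
  induction n with
  | zero => simp [gbinom_zero_right]
  | succ n ih =>
    rw [sum_range_succ, ih, ← sub_add_cancel α 1, gbinom_succ_succ, add_sub_cancel_right]
    ring

lemma sum_range_abs_gbinom_le_two {α : ℝ} (h0 : 0 ≤ α) (h1 : α ≤ 1) (n : ℕ) :
    ∑ j ∈ range n, |gbinom α j| ≤ 2 := by
  rcases n with _ | n
  · norm_num
  -- `∑_{j ≤ n} |binom(α,j)| = 2 - ∑_{j ≤ n} (-1)^j binom(α,j) = 2 - (-1)^n binom(α-1,n)`
  have habs : ∀ j ∈ range n, |gbinom α (j + 1)| = (-1) ^ j * gbinom α (j + 1) := fun j _ => by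
    rw [← abs_of_nonneg (neg_one_pow_mul_gbinom_succ_nonneg h0 h1 j), abs_mul, abs_neg_one_pow,
      one_mul]
  have halt := sum_range_neg_one_pow_mul_gbinom α n
  rw [sum_range_succ'] at halt
  rw [sum_range_succ', sum_congr rfl habs]
  simp only [pow_succ, gbinom_zero_right, pow_zero, one_mul, abs_one, mul_neg_one, neg_mul,
    sum_neg_distrib] at halt ⊢
  have := neg_one_pow_mul_gbinom_nonneg (sub_nonpos.2 h1) n
  linarith

lemma sum_range_abs_gbinom_le {α : ℝ} {n : ℕ} (h0 : 0 ≤ α) (hn : α ≤ n) (N : ℕ) :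
    ∑ j ∈ range N, |gbinom α j| ≤ 2 ^ n := by
  induction n generalizing α N with
  | zero =>
    obtain rfl : α = 0 := le_antisymm (by simpa using hn) h0
    rcases N with _ | N
    · norm_num
    · simp [sum_range_succ', gbinom_zero_succ, gbinom_zero_right]
  | succ n ih =>
    by_cases h1 : α ≤ 1
    · exact (sum_range_abs_gbinom_le_two h0 h1 N).trans (le_self_pow₀ one_le_two n.succ_ne_zero)
    rcases N with _ | N
    · positivity
    have ih' := ih (α := α - 1) (by linarith) (by push_cast at hn; linarith)
    have hpascal (j : ℕ) : |gbinom α (j + 1)| ≤ |gbinom (α - 1) j| + |gbinom (α - 1) (j + 1)| := by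
      rw [← sub_add_cancel α 1, gbinom_succ_succ, add_sub_cancel_right]
      exact abs_add_le _ _
    calc ∑ j ∈ range (N + 1), |gbinom α j| = ∑ j ∈ range N, |gbinom α (j + 1)| + 1 := by
          rw [sum_range_succ', gbinom_zero_right, abs_one]
      _ ≤ ∑ j ∈ range N, |gbinom (α - 1) j| + ∑ j ∈ range (N + 1), |gbinom (α - 1) j| := by
          rw [sum_range_succ' (fun j => |gbinom (α - 1) j|), gbinom_zero_right, abs_one,
            ← add_assoc, ← sum_add_distrib]
          gcongr with j
          exact hpascal j
      _ ≤ 2 ^ n + 2 ^ n := add_le_add (ih' N) (ih' (N + 1))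
      _ = 2 ^ (n + 1) := by ring

lemma summable_abs_gbinom {α : ℝ} (hα : 0 ≤ α) : Summable fun j => |gbinom α j| :=
  summable_of_sum_range_le (fun _ => abs_nonneg _) (sum_range_abs_gbinom_le hα (Nat.le_ceil α))

lemma tsum_abs_gbinom_le {α : ℝ} (hα : 0 ≤ α) : ∑' j, |gbinom α j| ≤ 2 ^ ⌈α⌉₊ :=
  (summable_abs_gbinom hα).tsum_le_of_sum_range_le (sum_range_abs_gbinom_le hα (Nat.le_ceil α))

section Symbol

/-- The binomial series of `(1 - z) ^ α`. -/
def fracDiffSymbol (α : ℝ) (z : ℂ) : ℂ :=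
  ∑' j : ℕ, (-1) ^ j * (gbinom α j : ℂ) * z ^ j

variable {α β : ℝ} {z : ℂ}

lemma norm_fracDiffSymbol_term_le (hz : ‖z‖ ≤ 1) (j : ℕ) :
    ‖(-1) ^ j * (gbinom α j : ℂ) * z ^ j‖ ≤ |gbinom α j| := by
  rw [norm_mul, norm_mul, norm_pow, norm_neg, norm_one, one_pow, one_mul, Complex.norm_real,
    Real.norm_eq_abs, norm_pow]
  exact mul_le_of_le_one_right (abs_nonneg _) (pow_le_one₀ (norm_nonneg z) hz)

lemma summable_norm_fracDiffSymbol_term (hα : 0 ≤ α) (hz : ‖z‖ ≤ 1) :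
    Summable fun j : ℕ => ‖(-1) ^ j * (gbinom α j : ℂ) * z ^ j‖ :=
  (summable_abs_gbinom hα).of_nonneg_of_le (fun _ => norm_nonneg _)
    (norm_fracDiffSymbol_term_le hz)

lemma norm_fracDiffSymbol_le (hα : 0 ≤ α) (hz : ‖z‖ ≤ 1) : ‖fracDiffSymbol α z‖ ≤ 2 ^ ⌈α⌉₊ :=
  calc ‖fracDiffSymbol α z‖ ≤ ∑' j : ℕ, ‖(-1) ^ j * (gbinom α j : ℂ) * z ^ j‖ :=
        norm_tsum_le_tsum_norm (summable_norm_fracDiffSymbol_term hα hz)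
    _ ≤ ∑' j, |gbinom α j| :=
        (summable_norm_fracDiffSymbol_term hα hz).tsum_le_tsum (norm_fracDiffSymbol_term_le hz)
          (summable_abs_gbinom hα)
    _ ≤ 2 ^ ⌈α⌉₊ := tsum_abs_gbinom_le hα

lemma fracDiffSymbol_add (hα : 0 ≤ α) (hβ : 0 ≤ β) (hz : ‖z‖ ≤ 1) :
    fracDiffSymbol (α + β) z = fracDiffSymbol α z * fracDiffSymbol β z := by
  rw [fracDiffSymbol, fracDiffSymbol, fracDiffSymbol,
    tsum_mul_tsum_eq_tsum_sum_antidiagonal_of_summable_norm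
      (summable_norm_fracDiffSymbol_term hα hz) (summable_norm_fracDiffSymbol_term hβ hz)]
  refine tsum_congr fun n => ?_
  rw [gbinom_add, Complex.ofReal_sum, mul_sum, sum_mul]
  refine sum_congr rfl fun ij hij => ?_
  rw [← mem_antidiagonal.1 hij, pow_add, pow_add, Complex.ofReal_mul]
  ring

end Symbol

section Fourier

open Complex

variable {f : ℝ → ℂ}

lemma Function.Periodic.intervalIntegral_comp_sub_eq {E : Type*} [NormedAddCommGroup E]
    [NormedSpace ℝ E] {g : ℝ → E} {T : ℝ} (hg : Function.Periodic g T) (a : ℝ) :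
    ∫ t in (0:ℝ)..T, g (t - a) = ∫ t in (0:ℝ)..T, g t := by
  rw [intervalIntegral.integral_comp_sub_right, zero_sub, sub_eq_neg_add]
  simpa using hg.intervalIntegral_add_eq (-a) 0

lemma norm_exp_neg_I_mul (k : ℤ) (x : ℝ) : ‖exp (-(I * k * x))‖ = 1 := by
  rw [show -(I * k * x) = ((-(k * x) : ℝ) : ℂ) * I by push_cast; ring]
  exact norm_exp_ofReal_mul_I _

lemma periodic_exp_neg_I_mul (k : ℤ) : Function.Periodic (fun t : ℝ => exp (-(I * k * t)))
    (2 * Real.pi) := fun t => by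
  dsimp only
  rw [show -(I * k * ((t + 2 * Real.pi : ℝ) : ℂ)) = -(I * k * t) + (-k : ℤ) * (2 * Real.pi * I) by
    push_cast; ring, exp_add, exp_int_mul_two_pi_mul_I, mul_one]

lemma fcoeff_const_mul (c : ℂ) (g : ℝ → ℂ) (k : ℤ) :
    fcoeff (fun x => c * g x) k = c * fcoeff g k := by
  simp only [fcoeff, mul_assoc, intervalIntegral.integral_const_mul]
  ring

lemma fcoeff_comp_sub (hf : Function.Periodic f (2 * Real.pi)) (a : ℝ) (k : ℤ) :
    fcoeff (fun t => f (t - a)) k = exp (-(I * k * a)) * fcoeff f k := by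
  have hshift (t : ℝ) : f (t - a) * exp (-(I * k * t))
      = exp (-(I * k * a)) * (f (t - a) * exp (-(I * k * ((t - a : ℝ) : ℂ)))) := by
    rw [mul_left_comm, ← exp_add]; push_cast; ring_nf
  have hperiodic := (hf.mul (periodic_exp_neg_I_mul k)).intervalIntegral_comp_sub_eq a
  simp only [Pi.mul_apply] at hperiodic
  simp only [fcoeff, hshift, intervalIntegral.integral_const_mul, hperiodic]
  ring

lemma fcoeff_tsum {g : ℕ → ℝ → ℂ} (hg : ∀ j, IntervalIntegrable (g j) volume 0 (2 * Real.pi))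
    (hsum : Summable fun j => ∫ t in (0:ℝ)..(2 * Real.pi), ‖g j t‖) (k : ℤ) :
    fcoeff (fun x => ∑' j, g j x) k = ∑' j, fcoeff (g j) k := by
  have h2π : (0:ℝ) ≤ 2 * Real.pi := by positivity
  simp only [fcoeff, ← tsum_mul_right, intervalIntegral.integral_of_le h2π, tsum_mul_left]
  congr 1
  refine (integral_tsum_of_summable_integral_norm (fun j => ?_) ?_).symm
  · exact ((hg j).mul_continuousOn (by fun_prop)).1
  · simpa only [norm_mul, norm_exp_neg_I_mul, mul_one, intervalIntegral.integral_of_le h2π]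
      using hsum

lemma fcoeff_fracDiff (hf : Function.Periodic f (2 * Real.pi))
    (hint : IntervalIntegrable f volume 0 (2 * Real.pi)) {α : ℝ} (hα : 0 ≤ α) (h : ℝ) (k : ℤ) :
    fcoeff (fracDiff α h f) k = fracDiffSymbol α (exp (-(I * k * h))) * fcoeff f k := by
  have hshift (a : ℝ) : IntervalIntegrable (fun t => f (t - a)) volume 0 (2 * Real.pi) := by
    simpa using
      (hf.intervalIntegrable₀ Real.two_pi_pos.ne' hint (-a) (2 * Real.pi - a)).comp_sub_right a
  have hnorm (c : ℂ) (a : ℝ) : ∫ t in (0:ℝ)..(2 * Real.pi), ‖c * f (t - a)‖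
      = ‖c‖ * ∫ t in (0:ℝ)..(2 * Real.pi), ‖f t‖ := by
    simp only [norm_mul, intervalIntegral.integral_const_mul]
    rw [(show Function.Periodic (fun t => ‖f t‖) (2 * Real.pi) from fun t => by
      simp only [hf t]).intervalIntegral_comp_sub_eq a]
  unfold fracDiff
  rw [fcoeff_tsum (fun j => (hshift _).const_mul _) ?_, fracDiffSymbol,
    ← tsum_mul_right]
  · refine tsum_congr fun j => ?_
    rw [fcoeff_const_mul, fcoeff_comp_sub hf, ← exp_nat_mul]
    push_cast
    ring_nf
  · refine ((summable_abs_gbinom hα).mul_right (∫ t in (0:ℝ)..(2 * Real.pi), ‖f t‖)).congr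
      fun j => ?_
    rw [hnorm, norm_mul, norm_pow, norm_neg, norm_one, one_pow, one_mul, norm_real,
      Real.norm_eq_abs]

end Fourier

section Luxemburg

variable {p μ : ℤ → ℝ} {g h : ℝ → ℂ} {c : ℝ}

lemma luxNorm_nonneg (p μ : ℤ → ℝ) (g : ℝ → ℂ) : 0 ≤ luxNorm p μ g :=
  Real.sInf_nonneg fun _ ha => ha.1.le

lemma mul_mem_lpSet_of_norm_fcoeff_le (hp : ∀ k, 0 ≤ p k) (hμ : ∀ k, 0 ≤ μ k) (hc : 0 < c)
    (hgh : ∀ k, ‖fcoeff g k‖ ≤ c * ‖fcoeff h k‖) {a : ℝ} (ha : a ∈ lpSet p μ h) :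
    c * a ∈ lpSet p μ g := by
  obtain ⟨ha0, hsum, hle⟩ := ha
  have hterm (k : ℤ) :
      μ k * (‖fcoeff g k‖ / (c * a)) ^ p k ≤ μ k * (‖fcoeff h k‖ / a) ^ p k := by
    have hk := hμ k
    have hpk := hp k
    gcongr μ k * ?_ ^ p k
    rw [← div_div, div_le_div_iff_of_pos_right ha0, div_le_iff₀' hc]
    exact hgh k
  have hnonneg (k : ℤ) : 0 ≤ μ k * (‖fcoeff g k‖ / (c * a)) ^ p k := by
    have hk := hμ k
    positivity
  have hsum' := hsum.of_nonneg_of_le hnonneg hterm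
  exact ⟨by positivity, hsum', (hsum'.tsum_le_tsum hterm hsum).trans hle⟩

lemma luxNorm_le_mul_of_norm_fcoeff_le (hp : ∀ k, 0 ≤ p k) (hμ : ∀ k, 0 ≤ μ k) (hc : 0 < c)
    (hgh : ∀ k, ‖fcoeff g k‖ ≤ c * ‖fcoeff h k‖) (hne : (lpSet p μ h).Nonempty) :
    luxNorm p μ g ≤ c * luxNorm p μ h := by
  rw [luxNorm, luxNorm, ← div_le_iff₀' hc]
  refine le_csInf hne fun a ha => ?_
  rw [div_le_iff₀' hc]
  exact csInf_le ⟨0, fun _ hb => hb.1.le⟩ (mul_mem_lpSet_of_norm_fcoeff_le hp hμ hc hgh ha)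

end Luxemburg

section FracDiff

variable {p μ : ℤ → ℝ} {f : ℝ → ℂ} {β γ : ℝ}

lemma fracDiff_zero (h : ℝ) (f : ℝ → ℂ) : fracDiff 0 h f = f := by
  ext x
  rw [fracDiff, tsum_eq_single 0 fun j hj => ?_]
  · simp [gbinom_zero_right]
  · obtain ⟨j, rfl⟩ := Nat.exists_eq_succ_of_ne_zero hj
    simp [gbinom_zero_succ]

lemma norm_fcoeff_fracDiff_add_le (hf : Function.Periodic f (2 * Real.pi))
    (hint : IntervalIntegrable f volume 0 (2 * Real.pi)) (hγ : 0 ≤ γ) (hβ : 0 ≤ β) (h : ℝ)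
    (k : ℤ) :
    ‖fcoeff (fracDiff (γ + β) h f) k‖ ≤ 2 ^ ⌈γ⌉₊ * ‖fcoeff (fracDiff β h f) k‖ := by
  have hz := (norm_exp_neg_I_mul k h).le
  rw [fcoeff_fracDiff hf hint (add_nonneg hγ hβ), fcoeff_fracDiff hf hint hβ,
    fracDiffSymbol_add hγ hβ hz, mul_assoc, norm_mul]
  exact mul_le_mul_of_nonneg_right (norm_fracDiffSymbol_le hγ hz) (norm_nonneg _)

lemma lpSet_fracDiff_nonempty (hp : ∀ k, 0 ≤ p k) (hμ : ∀ k, 0 ≤ μ k) (hf : MemS p μ f)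
    (hβ : 0 ≤ β) (h : ℝ) : (lpSet p μ (fracDiff β h f)).Nonempty := by
  obtain ⟨hper, hint, a, ha⟩ := hf
  have hβf := norm_fcoeff_fracDiff_add_le hper hint hβ le_rfl h
  rw [add_zero, fracDiff_zero] at hβf
  exact ⟨_, mul_mem_lpSet_of_norm_fcoeff_le hp hμ (by positivity) hβf ha⟩

lemma luxNorm_fracDiff_add_le (hp : ∀ k, 0 ≤ p k) (hμ : ∀ k, 0 ≤ μ k) (hf : MemS p μ f)
    (hγ : 0 ≤ γ) (hβ : 0 ≤ β) (h : ℝ) :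
    luxNorm p μ (fracDiff (γ + β) h f) ≤ 2 ^ ⌈γ⌉₊ * luxNorm p μ (fracDiff β h f) :=
  luxNorm_le_mul_of_norm_fcoeff_le hp hμ (by positivity)
    (norm_fcoeff_fracDiff_add_le hf.1 hf.2.1 hγ hβ h) (lpSet_fracDiff_nonempty hp hμ hf hβ h)

end FracDiff

theorem stmt_4_general (K : ℝ) (p μ : ℤ → ℝ) (hp : ∀ k : ℤ, 1 ≤ p k ∧ p k ≤ K)
    (hμ : ∀ k : ℤ, 0 ≤ μ k) (f : ℝ → ℂ) (hf : MemS p μ f)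
    (α β : ℝ) (hβ : 0 < β) (hβα : β ≤ α) (δ : ℝ) :
    modulus p μ α f δ ≤ 2 ^ (⌈α - β⌉₊ : ℕ) * modulus p μ β f δ := by
  have hp0 (k : ℤ) : 0 ≤ p k := zero_le_one.trans (hp k).1
  have hbdd :
      BddAbove (Set.range fun h : {h : ℝ // |h| ≤ δ} => luxNorm p μ (fracDiff β h.1 f)) := by
    refine ⟨2 ^ ⌈β⌉₊ * luxNorm p μ f, Set.forall_mem_range.2 fun h => ?_⟩
    simpa [fracDiff_zero] using luxNorm_fracDiff_add_le hp0 hμ hf hβ.le le_rfl h.1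
  refine Real.iSup_le (fun h => ?_)
    (mul_nonneg (by positivity) (Real.iSup_nonneg fun _ => luxNorm_nonneg _ _ _))
  calc luxNorm p μ (fracDiff α h.1 f)
      ≤ 2 ^ ⌈α - β⌉₊ * luxNorm p μ (fracDiff β h.1 f) := by
        simpa using luxNorm_fracDiff_add_le hp0 hμ hf (sub_nonneg.2 hβα) hβ.le h.1
    _ ≤ 2 ^ ⌈α - β⌉₊ * modulus p μ β f δ := by
        gcongr
        exact le_ciSup hbdd h

/-- for `α ≥ β > 0`, `ω_α(f,δ)_{p,μ} ≤ 2^{⌈α−β⌉} ω_β(f,δ)_{p,μ}`. -/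
theorem stmt_4 (K : ℝ) (p μ : ℤ → ℝ) (hp : ∀ k : ℤ, 1 ≤ p k ∧ p k ≤ K)
    (hμ : ∀ k : ℤ, 0 ≤ μ k) (f : ℝ → ℂ) (hf : MemS p μ f)
    (α β : ℝ) (hβ : 0 < β) (hβα : β ≤ α) (δ : ℝ) (hδ : 0 < δ) :
    modulus p μ α f δ ≤ 2 ^ (⌈α - β⌉₊ : ℕ) * modulus p μ β f δ :=
  stmt_4_general K p μ hp hμ f hf α β hβ hβα δ
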